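/- arXiv:1106.4735 — 4 statements merged into one kernel-verified Lean document; each statement's English description precedes it below -/
import Mathlib

section
/- Let l : 𝕋 → ℕ be defined recursively by l(1) = 0 and l(aˆb) = l(a) + 1. For every ultrafilter U on 𝕋, the set {t ∈ 𝕋 : l(t) is even} belongs to U if and only if {t ∈ 𝕋 : l(t) is odd} belongs to UˆU. Consequently UˆU ≠ U for every U ∈ β𝕋, i.e., (β𝕋, ˆ) contains no idempotent element. -/
open scoped Classical

/-- The free binary system (free magma) on one generator. -/
abbrev 𝕋 : Type := FreeMagma Unit

/-- The generator `1` of `𝕋`. -/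
def e1 : 𝕋 := FreeMagma.of ()

/-- `#(t)`: the number of occurrences of the generator in `t`. -/
def cnt : 𝕋 → ℕ
  | FreeMagma.of _ => 1
  | FreeMagma.mul a b => cnt a + cnt b

/-- The space `ℓ^∞(S)` of bounded real-valued functions on `S`. -/
def Bdd (S : Type*) : Type _ := {f : S → ℝ // ∃ M, ∀ s, |f s| ≤ M}

/-- Package a function as an element of `Bdd S` (junk value if unbounded). -/
noncomputable def liftBdd {S : Type*} (g : S → ℝ) : Bdd S :=
  if h : ∃ M, ∀ s, |g s| ≤ M then ⟨g, h⟩ else ⟨fun _ => 0, 0, fun _ => by simp⟩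

/-- The constant function as an element of `Bdd S`. -/
def constB (S : Type*) (c : ℝ) : Bdd S := ⟨fun _ => c, |c|, fun _ => le_rfl⟩

/-- The characteristic function of `E` as an element of `Bdd S`. -/
noncomputable def indB {S : Type*} (E : Set S) : Bdd S :=
  liftBdd (fun s => if s ∈ E then 1 else 0)

/-- `Pr S`: finitely additive probability measures on `S`, identified with the
positive normalized linear functionals on `ℓ^∞(S)`.  The weak* topology is the
subspace topology inherited from the product topology on `Bdd S → ℝ`. -/
def PrSet (S : Type*) : Set (Bdd S → ℝ) :=
  {φ | (∀ f g h : Bdd S, (∀ s, h.1 s = f.1 s + g.1 s) → φ h = φ f + φ g) ∧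
       (∀ (c : ℝ) (f g : Bdd S), (∀ s, g.1 s = c * f.1 s) → φ g = c * φ f) ∧
       (∀ f : Bdd S, (∀ s, 0 ≤ f.1 s) → 0 ≤ φ f) ∧
       φ (constB S 1) = 1}

/-- `μ(E)`: the measure of a set `E ⊆ S`. -/
noncomputable def mE {S : Type*} (φ : Bdd S → ℝ) (E : Set S) : ℝ := φ (indB E)

/-- The product `μ ⊗ ν` of finitely additive measures:
`μ⊗ν(f) = μ(x ↦ ν(y ↦ f(x,y)))`. -/
noncomputable def prodM {S T : Type*} (φ : Bdd S → ℝ) (ψ : Bdd T → ℝ) :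
    Bdd (S × T) → ℝ :=
  fun f => φ (liftBdd fun x => ψ (liftBdd fun y => f.1 (x, y)))

/-- The extension of a binary operation `op` on `S` to `Pr S`:
`μ⋆ν(f) = μ(x ↦ ν(y ↦ f(x ⋆ y)))`. -/
noncomputable def starM {S : Type*} (op : S → S → S) (φ ψ : Bdd S → ℝ) :
    Bdd S → ℝ :=
  fun f => φ (liftBdd fun x => ψ (liftBdd fun y => f.1 (op x y)))

/-- The extension of `ˆ` to `Pr 𝕋`. -/
noncomputable def hmul (φ ψ : Bdd 𝕋 → ℝ) : Bdd 𝕋 → ℝ := starM (· * ·) φ ψ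

/-- Finitely supported probability measures: finite convex combinations of
point evaluations. -/
def FinSuppPr (S : Type*) : Set (Bdd S → ℝ) :=
  {φ | ∃ (F : Finset S) (w : S → ℝ), (∀ s ∈ F, 0 ≤ w s) ∧ (∑ s ∈ F, w s) = 1 ∧
      ∀ f : Bdd S, φ f = ∑ s ∈ F, w s * f.1 s}

/-- `𝔸_n`: finitely supported probability measures concentrated on `𝕋_n`. -/
def Asets (n : ℕ) : Set (Bdd 𝕋 → ℝ) :=
  {φ | ∃ (F : Finset 𝕋) (w : 𝕋 → ℝ), (∀ t ∈ F, cnt t = n) ∧ (∀ t ∈ F, 0 ≤ w t) ∧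
      (∑ t ∈ F, w t) = 1 ∧ ∀ f : Bdd 𝕋, φ f = ∑ t ∈ F, w t * f.1 t}

/-- The extension of `+` on `ℕ` to ultrafilters: `A ∈ U+V` iff
`{m : {n : m+n ∈ A} ∈ V} ∈ U`. -/
noncomputable def addU (U V : Ultrafilter ℕ) : Ultrafilter ℕ :=
  U.bind fun m => V.map fun n => m + n

/-- `𝔸_U`: the `U`-limit of the sets `𝔸_m`. -/
def AU (U : Ultrafilter ℕ) : Set (Bdd 𝕋 → ℝ) :=
  {μ | μ ∈ PrSet 𝕋 ∧ ∀ W : Set (Bdd 𝕋 → ℝ), IsOpen W → μ ∈ W →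
      {m : ℕ | (W ∩ Asets m).Nonempty} ∈ U}

/-- The extension of `ˆ` to ultrafilters on `𝕋`: `E ∈ UˆV` iff
`{u : {v : uˆv ∈ E} ∈ V} ∈ U`. -/
noncomputable def umul (U V : Ultrafilter 𝕋) : Ultrafilter 𝕋 :=
  U.bind fun u => V.map fun v => u * v

/-- Substitution of measures into a term `t`:
`t(μ_0,…,μ_{m-1})(f)` is the nested integral
`μ_0(x_0 ↦ ⋯ μ_{m-1}(x_{m-1} ↦ f(t(x⃗)))⋯)`. -/
noncomputable def substM : 𝕋 → List (Bdd 𝕋 → ℝ) → (Bdd 𝕋 → ℝ)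
  | FreeMagma.of _, μs => μs.headI
  | FreeMagma.mul a b, μs =>
      hmul (substM a (μs.take (cnt a))) (substM b (μs.drop (cnt a)))

/-- `t_k`: iteratively remove the carets of `t` involving only leaves of index
greater than `k`. -/
def tk : 𝕋 → ℕ → 𝕋
  | FreeMagma.of _, _ => e1
  | FreeMagma.mul a b, k => if k < cnt a then tk a k * e1 else a * tk b (k - cnt a)

/-- `l_k(t) = #(t_k) - 2` (truncated subtraction). -/
def lk (t : 𝕋) (k : ℕ) : ℕ := cnt (tk t k) - 2

/-- The subterm `t/σ` of `t` at address `σ` (`false` = left/`0`, `true` = right/`1`). -/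
def subT : 𝕋 → List Bool → Option 𝕋
  | t, [] => some t
  | FreeMagma.of _, _ :: _ => none
  | FreeMagma.mul a b, c :: σ => if c then subT b σ else subT a σ

/-- `σ <_lex ς` for incompatible binary sequences: at the first coordinate where
they differ, `σ` has `0` and `ς` has `1`. -/
def lexLT (σ ς : List Bool) : Prop :=
  ∃ p σ' ς', σ = p ++ (false :: σ') ∧ ς = p ++ (true :: ς')

/-- `x₀·E`. -/
def x0E (E : Set 𝕋) : Set 𝕋 :=
  {x | ∃ a b c : 𝕋, x = a * (b * c) ∧ (a * b) * c ∈ E}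

/-- `x₁·E`. -/
def x1E (E : Set 𝕋) : Set 𝕋 :=
  {x | ∃ s a b c : 𝕋, x = s * (a * (b * c)) ∧ s * ((a * b) * c) ∈ E}

/-- `u_σ` for a nonempty finite binary sequence `σ`. -/
def uSeq : List Bool → 𝕋
  | [] => e1
  | [_] => e1
  | b :: σ => if b then e1 * uSeq σ else uSeq σ * e1

/-- `a ≪ b`: for some `p`, `#(a) < 2^p` and `2^p` divides `#(b)`. -/
def ll (a b : 𝕋) : Prop := ∃ p : ℕ, cnt a < 2 ^ p ∧ 2 ^ p ∣ cnt b

/-- `r↾n`: the first `n` values of `r` as a finite binary sequence. -/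
def rList (r : ℕ → Bool) (n : ℕ) : List Bool := (List.range n).map r

/-- The map `h_r : 𝕋 → 𝕋`. -/
noncomputable def hr (r : ℕ → Bool) : 𝕋 → 𝕋
  | FreeMagma.of _ => uSeq (rList r 1)
  | FreeMagma.mul a b =>
      if ll a b then hr r a * hr r b else uSeq (rList r (cnt a + cnt b))

/-- The action of `h_r` on measures: `h_r(μ)(f) = μ(f ∘ h_r)`. -/
noncomputable def hrM (r : ℕ → Bool) (φ : Bdd 𝕋 → ℝ) : Bdd 𝕋 → ℝ :=
  fun f => φ (liftBdd fun t => f.1 (hr r t))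

/-- `lev`: `l(1) = 0`, `l(aˆb) = l(a) + 1`. -/
def lev : 𝕋 → ℕ
  | FreeMagma.of _ => 0
  | FreeMagma.mul a _ => lev a + 1

/-- `C` is closed under `ˆ`. -/
def HClosed (C : Set (Bdd 𝕋 → ℝ)) : Prop := ∀ μ ∈ C, ∀ ν ∈ C, hmul μ ν ∈ C
/-- `(β𝕋, ˆ)` has no idempotent: for every ultrafilter `U` on `𝕋`,
`{t : l(t) even} ∈ U ↔ {t : l(t) odd} ∈ UˆU`, hence `UˆU ≠ U`. -/
theorem no_idempotent_ultrafilter_on_T :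
    (∀ U : Ultrafilter 𝕋,
      {t : 𝕋 | Even (lev t)} ∈ U ↔ {t : 𝕋 | Odd (lev t)} ∈ umul U U) ∧
    (∀ U : Ultrafilter 𝕋, umul U U ≠ U) := by
  have key : ∀ U : Ultrafilter 𝕋,
      {t : 𝕋 | Even (lev t)} ∈ U ↔ {t : 𝕋 | Odd (lev t)} ∈ umul U U := by
    intro U
    have hmem : {t : 𝕋 | Odd (lev t)} ∈ umul U U ↔
        {u : 𝕋 | {v : 𝕋 | Odd (lev (u * v))} ∈ U} ∈ U := by
      rfl
    rw [hmem]
    have hset : ∀ u : 𝕋, {v : 𝕋 | Odd (lev (u * v))} = if Even (lev u) then Set.univ else ∅ := by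
      intro u
      have : ∀ v : 𝕋, lev (u * v) = lev u + 1 := fun v => rfl
      by_cases h : Even (lev u)
      · simp only [h, if_true]
        ext v; simp [this, Even.add_one h]
      · simp only [h, if_false]
        ext v
        simp only [Set.mem_setOf_eq, Set.mem_empty_iff_false, iff_false]
        intro hodd
        exact h (by simpa [this] using (Nat.Odd.sub_odd hodd odd_one : Even (lev u + 1 - 1)))
    have : {u : 𝕋 | {v : 𝕋 | Odd (lev (u * v))} ∈ U} = {u : 𝕋 | Even (lev u)} := by
      ext u
      rw [Set.mem_setOf_eq, hset u]
      by_cases h : Even (lev u) <;> simp [h, Ultrafilter.empty_notMem]; exact Filter.univ_mem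
    rw [this]
  refine ⟨key, fun U hU => ?_⟩
  have h1 := (key U)
  rw [hU] at h1
  have hcompl : {t : 𝕋 | Odd (lev t)} = {t : 𝕋 | Even (lev t)}ᶜ := by
    ext t; exact Nat.not_even_iff_odd.symm
  by_cases h : {t : 𝕋 | Even (lev t)} ∈ U
  · have := h1.mp h
    rw [hcompl] at this
    exact (Ultrafilter.compl_notMem_iff.mpr h) this
  · have : {t : 𝕋 | Odd (lev t)} ∈ U := by
      rw [hcompl]; exact Ultrafilter.compl_mem_iff_notMem.mpr h
    exact h (h1.mpr this)
end

section
/- Let S₀ and S₁ be nonempty sets. For every ν ∈ Pr(S₁), the map μ ↦ μ⊗ν from Pr(S₀) to Pr(S₀ × S₁) is continuous with respect to the weak* topologies. Moreover, if μ ∈ Pr(S₀) is finitely supported, then the map ν ↦ μ⊗ν from Pr(S₁) to Pr(S₀ × S₁) is weak*-continuous. -/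
open scoped Classical

/-!
For fixed `f`, the value `(μ ⊗ ν)(f)` is `μ` evaluated at the function `x ↦ ν(f(x, ·))`, which
does not depend on `μ`; as the weak* topology is that of pointwise convergence, `μ ↦ μ ⊗ ν` is
continuous. If `μ = ∑ wₛ δₛ`, then `(μ ⊗ ν)(f) = ∑ wₛ ν(f(s, ·))` is a finite combination of
evaluations of `ν`, hence continuous in `ν`. The one point to check is that for `ν ∈ Pr(S₁)` the
function `x ↦ ν(f(x, ·))` is bounded (by `‖f‖∞`), so that it really is an element of `ℓ^∞(S₀)`.
-/

lemma liftBdd_val {S : Type*} {g : S → ℝ} (hg : ∃ M, ∀ s, |g s| ≤ M) : (liftBdd g).1 = g := by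
  simp [liftBdd, hg]

section PrSet

variable {S : Type*} {φ : Bdd S → ℝ}

lemma PrSet.apply_constB (hφ : φ ∈ PrSet S) (c : ℝ) : φ (constB S c) = c := by
  rw [hφ.2.1 c (constB S 1) (constB S c) fun _ => (mul_one c).symm, hφ.2.2.2, mul_one]

lemma PrSet.mono (hφ : φ ∈ PrSet S) {f g : Bdd S} (hfg : ∀ s, f.1 s ≤ g.1 s) : φ f ≤ φ g := by
  have hd : ∃ M, ∀ s, |g.1 s - f.1 s| ≤ M := by
    obtain ⟨Mf, hf⟩ := f.2
    obtain ⟨Mg, hg⟩ := g.2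
    exact ⟨Mg + Mf, fun s => (abs_sub _ _).trans (add_le_add (hg s) (hf s))⟩
  let d : Bdd S := ⟨fun s => g.1 s - f.1 s, hd⟩
  have hsum : φ g = φ f + φ d := hφ.1 f d g fun s => (add_sub_cancel _ _).symm
  have hd_nonneg : 0 ≤ φ d := hφ.2.2.1 d fun s => sub_nonneg.mpr (hfg s)
  linarith

lemma PrSet.abs_apply_le (hφ : φ ∈ PrSet S) {f : Bdd S} {M : ℝ} (hf : ∀ s, |f.1 s| ≤ M) :
    |φ f| ≤ M := by
  have lower := PrSet.mono hφ (f := constB S (-M)) fun s => (abs_le.mp (hf s)).1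
  have upper := PrSet.mono hφ (g := constB S M) fun s => (abs_le.mp (hf s)).2
  rw [PrSet.apply_constB hφ] at lower upper
  exact abs_le.mpr ⟨lower, upper⟩

end PrSet

section prodM

variable {S T : Type*}

lemma continuous_prodM_left (ψ : Bdd T → ℝ) :
    Continuous fun φ : Bdd S → ℝ => prodM φ ψ :=
  continuous_pi fun _ => continuous_apply _

lemma prodM_apply_of_finSupp {φ : Bdd S → ℝ} {ψ : Bdd T → ℝ} (hψ : ψ ∈ PrSet T)
    {F : Finset S} {w : S → ℝ} (hφ : ∀ f : Bdd S, φ f = ∑ s ∈ F, w s * f.1 s)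
    (f : Bdd (S × T)) :
    prodM φ ψ f = ∑ s ∈ F, w s * ψ (liftBdd fun y => f.1 (s, y)) := by
  obtain ⟨M, hM⟩ := f.2
  have hsection : ∀ x, |ψ (liftBdd fun y => f.1 (x, y))| ≤ M := fun x =>
    PrSet.abs_apply_le hψ (by rw [liftBdd_val ⟨M, fun y => hM (x, y)⟩]; exact fun y => hM (x, y))
  rw [prodM, hφ, liftBdd_val ⟨M, hsection⟩]

lemma continuousOn_prodM_right {φ : Bdd S → ℝ} (hφ : φ ∈ FinSuppPr S) :
    ContinuousOn (fun ψ : Bdd T → ℝ => prodM φ ψ) (PrSet T) := by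
  obtain ⟨F, w, -, -, hrep⟩ := hφ
  have hsum : Continuous fun (ψ : Bdd T → ℝ) (f : Bdd (S × T)) =>
      ∑ s ∈ F, w s * ψ (liftBdd fun y => f.1 (s, y)) :=
    continuous_pi fun _ => continuous_finsetSum F fun _ _ =>
      continuous_const.mul (continuous_apply _)
  exact hsum.continuousOn.congr fun ψ hψ => funext (prodM_apply_of_finSupp hψ hrep)

end prodM

theorem prod_measure_continuous_general (S₀ S₁ : Type) :
    (∀ ν : Bdd S₁ → ℝ, ν ∈ PrSet S₁ →
      ContinuousOn (fun μ : Bdd S₀ → ℝ => prodM μ ν) (PrSet S₀)) ∧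
    (∀ μ : Bdd S₀ → ℝ, μ ∈ PrSet S₀ → μ ∈ FinSuppPr S₀ →
      ContinuousOn (fun ν : Bdd S₁ → ℝ => prodM μ ν) (PrSet S₁)) :=
  ⟨fun ν _ => (continuous_prodM_left ν).continuousOn,
   fun _ _ hμ => continuousOn_prodM_right hμ⟩

/-- for `ν ∈ Pr(S₁)`, `μ ↦ μ⊗ν` is weak*-continuous on `Pr(S₀)`;
and for finitely supported `μ ∈ Pr(S₀)`, `ν ↦ μ⊗ν` is weak*-continuous on `Pr(S₁)`. -/
theorem prod_measure_continuous (S₀ S₁ : Type) [Nonempty S₀] [Nonempty S₁] :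
    (∀ ν : Bdd S₁ → ℝ, ν ∈ PrSet S₁ →
      ContinuousOn (fun μ : Bdd S₀ → ℝ => prodM μ ν) (PrSet S₀)) ∧
    (∀ μ : Bdd S₀ → ℝ, μ ∈ PrSet S₀ → μ ∈ FinSuppPr S₀ →
      ContinuousOn (fun ν : Bdd S₁ → ℝ => prodM μ ν) (PrSet S₁)) :=
  prod_measure_continuous_general S₀ S₁
end

section
/- If c : 𝕋 → [0,1] is any function and ε > 0, then there exist r ∈ [0,1] and an increasing sequence μ_i (i ∈ ℕ) of elements of 𝔸 such that |c(μ_i) − r| < ε for all i and |c(μ_iˆμ_j) − r| < ε for all i < j. -/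
open scoped Classical

/-!
Fix a nonprincipal ultrafilter `U` on `ℕ` with `U + U = U` and let `W k` be the iterated
`U`-limit of `c` on the balanced tree of depth `k` whose `2 ^ k` leaves are replaced by combs with
`n₁, …, n_{2^k}` leaves. Idempotence lets each `nᵢ` be split as `n + n'`, so for a block `b` of
`2 ^ (k + 1)` integers the depth-`k` tree on the pair sums of `b` and the depth-`(k + 1)` tree on
`b` have the same number of leaves and limits `W k`, `W (k + 1)`. For `μ = α δ_s + (1 - α) δ_t`
built from these two trees, `c(μ)` is close to `α W k + (1 - α) W (k + 1)`, and `c(μ ˆ μ')`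
to a quadratic in `α` whose difference from it is `W (k + 1) - W k` at `α = 1` and
`W (k + 2) - W (k + 1)` at `α = 0`. As `W` is bounded, some difference is small or consecutive
differences change sign, and the intermediate value theorem gives a good `α`. The blocks are
chosen greedily, one entry at a time in a `U`-large set, so that all values of `c` at pairs of
blocks are close to their iterated limits.
-/

open Filter Topology Set

attribute [local instance] Ultrafilter.add

namespace HindmanForPairs

lemma pos_of_mem_FS {s : Stream' ℕ} (hs : ∀ i, 0 < s.get i) {m : ℕ} (hm : m ∈ Hindman.FS s) :
    0 < m := by
  induction hm with
  | head' s => exact hs 0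
  | tail' s m _ ih => exact ih fun i => hs (i + 1)
  | cons' s m _ ih => exact Nat.add_pos_left (hs 0) m

lemma exists_idempotent_ultrafilter_le_atTop :
    ∃ U : Ultrafilter ℕ, U + U = U ∧ (U : Filter ℕ) ≤ atTop := by
  obtain ⟨U, hUU, hFS⟩ := Hindman.exists_idempotent_ultrafilter_le_FS fun n : ℕ => n + 1
  refine ⟨U, hUU, Nat.cofinite_eq_atTop ▸ U.le_cofinite_or_eq_pure.resolve_right ?_⟩
  rintro ⟨a, rfl⟩
  -- a principal idempotent is `pure 0`, and `0` is not a finite sum of positive integers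
  have ha : ∀ᶠ m in ((pure a : Ultrafilter ℕ) : Filter ℕ), m = a := by simp
  rw [← hUU, Ultrafilter.eventually_add] at ha
  have haa : a + a = a := by simpa using ha
  have : 0 < a := pos_of_mem_FS (fun i => Nat.succ_pos i) hFS
  omega

section UltraLimit

variable {U : Ultrafilter ℕ} {h : ℕ → ℝ}

lemma tendsto_limUnder_of_mem_Icc (hh : ∀ n, h n ∈ Icc (0 : ℝ) 1) :
    Tendsto h U (𝓝 (limUnder (U : Filter ℕ) h)) := by
  obtain ⟨x, -, hx⟩ := isCompact_Icc.ultrafilter_le_nhds (U.map h)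
    (le_principal_iff.2 (mem_map.2 (univ_mem' hh)))
  exact tendsto_nhds_limUnder ⟨x, hx⟩

lemma limUnder_mem_of_isClosed (hh : ∀ n, h n ∈ Icc (0 : ℝ) 1) {s : Set ℝ} (hs : IsClosed s)
    (hhs : ∀ᶠ n in U, h n ∈ s) : limUnder (U : Filter ℕ) h ∈ s :=
  hs.mem_of_tendsto (tendsto_limUnder_of_mem_Icc hh) hhs

lemma limUnder_mem_Icc (hh : ∀ n, h n ∈ Icc (0 : ℝ) 1) :
    limUnder (U : Filter ℕ) h ∈ Icc (0 : ℝ) 1 :=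
  limUnder_mem_of_isClosed hh isClosed_Icc (Eventually.of_forall hh)

lemma limUnder_limUnder_add (hU : U + U = U) (hh : ∀ n, h n ∈ Icc (0 : ℝ) 1) :
    limUnder (U : Filter ℕ) (fun n => limUnder (U : Filter ℕ) fun m => h (n + m)) =
      limUnder (U : Filter ℕ) h := by
  refine Tendsto.limUnder_eq ((closed_nhds_basis _).tendsto_right_iff.2 fun V ⟨hV, hVc⟩ => ?_)
  have hhV : ∀ᶠ n in (U : Filter ℕ), h n ∈ V := tendsto_limUnder_of_mem_Icc hh hV
  rw [← hU, Ultrafilter.eventually_add] at hhV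
  exact hhV.mono fun n hn => limUnder_mem_of_isClosed (fun m => hh (n + m)) hVc hn

end UltraLimit

def pairSums : List ℕ → List ℕ
  | a :: b :: l => (a + b) :: pairSums l
  | _ => []

lemma pairSums_append : ∀ {l₁ : List ℕ} (l₂ : List ℕ), Even l₁.length →
    pairSums (l₁ ++ l₂) = pairSums l₁ ++ pairSums l₂
  | [], _, _ => rfl
  | [_], _, h => by simp at h
  | _ :: _ :: l₁, l₂, h => by
    simp only [List.length_cons, Nat.even_add_one, not_not] at h
    simp [pairSums, pairSums_append l₂ h]

lemma length_pairSums : ∀ l : List ℕ, (pairSums l).length = l.length / 2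
  | [] => rfl
  | [_] => by simp [pairSums]
  | _ :: _ :: l => by simp only [pairSums, List.length_cons, length_pairSums l]; omega

lemma sum_pairSums : ∀ {l : List ℕ}, Even l.length → (pairSums l).sum = l.sum
  | [], _ => rfl
  | [_], h => by simp at h
  | a :: b :: l, h => by
    simp only [List.length_cons, Nat.even_add_one, not_not] at h
    simp [pairSums, sum_pairSums h, add_assoc]

lemma pos_of_mem_pairSums : ∀ {l : List ℕ}, (∀ x ∈ l, 0 < x) → ∀ y ∈ pairSums l, 0 < y
  | [], _, _, hy | [_], _, _, hy => by simp [pairSums] at hy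
  | a :: b :: l, hl, y, hy => by
    rcases List.mem_cons.1 hy with rfl | hy
    · exact Nat.add_pos_left (hl a (by simp)) b
    · exact pos_of_mem_pairSums (fun x hx => hl x (by simp [hx])) y hy

section IteratedLimit

variable {U : Ultrafilter ℕ} {F G : List ℕ → ℝ}

noncomputable def iterLim (U : Ultrafilter ℕ) : ℕ → (List ℕ → ℝ) → ℝ
  | 0, F => F []
  | A + 1, F => limUnder (U : Filter ℕ) fun n => iterLim U A fun l => F (n :: l)

lemma iterLim_succ (A : ℕ) (F : List ℕ → ℝ) :
    iterLim U (A + 1) F = limUnder (U : Filter ℕ) fun n => iterLim U A fun l => F (n :: l) :=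
  rfl

lemma iterLim_mem_Icc (hF : ∀ l, F l ∈ Icc (0 : ℝ) 1) (A : ℕ) : iterLim U A F ∈ Icc (0 : ℝ) 1 := by
  induction A generalizing F with
  | zero => exact hF []
  | succ A ih => exact limUnder_mem_Icc fun n => ih fun l => hF (n :: l)

lemma iterLim_congr {A : ℕ} (h : ∀ l, l.length = A → F l = G l) :
    iterLim U A F = iterLim U A G := by
  induction A generalizing F G with
  | zero => exact h [] rfl
  | succ A ih =>
    simp only [iterLim_succ]
    congr 1
    funext n
    exact ih fun l hl => h (n :: l) (by simp [hl])

lemma iterLim_const (A : ℕ) (r : ℝ) : iterLim U A (fun _ => r) = r := by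
  induction A with
  | zero => rfl
  | succ A ih => simpa only [iterLim_succ, ih] using tendsto_const_nhds.limUnder_eq

lemma iterLim_take (A B : ℕ) (F : List ℕ → ℝ) :
    iterLim U (A + B) (fun l => F (l.take A)) = iterLim U A F := by
  induction A generalizing F with
  | zero =>
    simp only [zero_add, List.take_zero]
    exact iterLim_const B (F [])
  | succ A ih =>
    rw [Nat.add_right_comm, iterLim_succ, iterLim_succ]
    simp only [List.take_succ_cons]
    exact congrArg _ (funext fun n => ih fun l => F (n :: l))

lemma iterLim_pairSums (hU : U + U = U) (hF : ∀ l, F l ∈ Icc (0 : ℝ) 1) (A : ℕ) :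
    iterLim U (2 * A) (fun l => F (pairSums l)) = iterLim U A F := by
  induction A generalizing F with
  | zero => rfl
  | succ A ih =>
    have hinner : ∀ n m, iterLim U (2 * A) (fun l => F (pairSums (n :: m :: l))) =
        iterLim U A fun l => F ((n + m) :: l) := fun n m => ih fun l => hF _
    rw [show 2 * (A + 1) = 2 * A + 1 + 1 by ring, iterLim_succ]
    simp only [iterLim_succ, hinner]
    exact limUnder_limUnder_add (h := fun s => iterLim U A fun l => F (s :: l)) hU
      fun s => iterLim_mem_Icc (fun l => hF (s :: l)) A

end IteratedLimit

section Blocks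

variable {U : Ultrafilter ℕ} {T : ℕ}

noncomputable def partialLim (U : Ultrafilter ℕ) (T : ℕ) (F : List ℕ → ℝ) (l : List ℕ) : ℝ :=
  iterLim U (T - l.length) fun l' => F (l ++ l')

lemma partialLim_nil (F : List ℕ → ℝ) : partialLim U T F [] = iterLim U T F := rfl

lemma partialLim_of_length_eq (F : List ℕ → ℝ) {l : List ℕ} (hl : l.length = T) :
    partialLim U T F l = F l := by
  simp [partialLim, hl, iterLim]

lemma tendsto_partialLim_append_singleton {F : List ℕ → ℝ} (hF : ∀ l, F l ∈ Icc (0 : ℝ) 1)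
    {l : List ℕ} (hl : l.length < T) :
    Tendsto (fun n => partialLim U T F (l ++ [n])) U (𝓝 (partialLim U T F l)) := by
  have hT : T - l.length = T - (l ++ [0]).length + 1 := by
    rw [List.length_append, List.length_singleton]; omega
  have hlim : partialLim U T F l =
      limUnder (U : Filter ℕ) fun n => partialLim U T F (l ++ [n]) := by
    simp [partialLim, hT, iterLim_succ]
  rw [hlim]
  exact tendsto_limUnder_of_mem_Icc fun n => iterLim_mem_Icc (fun l' => hF _) _

variable {ι : Type*} [Finite ι] {F : ι → List ℕ → ℝ}

lemma exists_block_extension (hF : ∀ i l, F i l ∈ Icc (0 : ℝ) 1) (hU : (U : Filter ℕ) ≤ atTop)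
    {η : ℝ} (hη : 0 < η) (P : Finset (List ℕ)) (N s : ℕ) (hP : ∀ p ∈ P, p.length + s ≤ T) :
    ∃ b : List ℕ, b.length = s ∧ (∀ x ∈ b, N ≤ x) ∧
      ∀ i, ∀ p ∈ P, |partialLim U T (F i) (p ++ b) - partialLim U T (F i) p| ≤ s * η := by
  induction s with
  | zero => exact ⟨[], rfl, by simp, by simp⟩
  | succ s ih =>
    obtain ⟨b, hlen, hN, hb⟩ := ih fun p hp => by have := hP p hp; omega
    have hstep : ∀ᶠ n in (U : Filter ℕ), N ≤ n ∧ ∀ i, ∀ p ∈ P,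
        |partialLim U T (F i) (p ++ b ++ [n]) - partialLim U T (F i) (p ++ b)| < η := by
      have hNn : ∀ᶠ n in (U : Filter ℕ), N ≤ n := hU (eventually_ge_atTop N)
      refine hNn.and
        (eventually_all.2 fun i => (eventually_all_finset P).2 fun p hp => ?_)
      have hlt : (p ++ b).length < T := by have := hP p hp; simp only [List.length_append]; omega
      simpa only [Real.dist_eq] using
        Metric.tendsto_nhds.1 (tendsto_partialLim_append_singleton (hF i) hlt) η hη
    obtain ⟨n, hnN, hn⟩ := hstep.exists
    refine ⟨b ++ [n], by simp [hlen], by simpa [or_imp, forall_and] using ⟨hN, hnN⟩,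
      fun i p hp => ?_⟩
    rw [← List.append_assoc]
    calc _ ≤ |partialLim U T (F i) (p ++ b ++ [n]) - partialLim U T (F i) (p ++ b)| +
          |partialLim U T (F i) (p ++ b) - partialLim U T (F i) p| := abs_sub_le _ _ _
      _ ≤ η + s * η := add_le_add (hn i p hp).le (hb i p hp)
      _ = (s + 1 : ℕ) * η := by push_cast; ring

lemma exists_seq_blocks (hF : ∀ i l, F i l ∈ Icc (0 : ℝ) 1) (hU : (U : Filter ℕ) ≤ atTop)
    {A : ℕ} (hA : 0 < A) {η : ℝ} (hη : 0 < η) :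
    ∃ b : ℕ → List ℕ, (∀ i, (b i).length = A) ∧ (∀ i, ∀ x ∈ b i, 0 < x) ∧
      StrictMono (fun i => (b i).sum) ∧
      ∀ m i j, i < j → |F m (b i ++ b j) - iterLim U (2 * A) (F m)| ≤ η := by
  set δ := η / (2 * A)
  have hδ : 0 < δ := by positivity
  have hAδ : A * δ + A * δ = η := by simp only [δ]; field_simp; ring
  let L m := partialLim U (2 * A) (F m)
  obtain ⟨b, hP, hr⟩ := exists_seq_of_forall_finset_exists
    (fun b : List ℕ => b.length = A ∧ (∀ x ∈ b, 0 < x) ∧ ∀ m, |L m b - L m []| ≤ A * δ)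
    (fun b b' => b.sum < b'.sum ∧ ∀ m, |L m (b ++ b') - L m b| ≤ A * δ) fun S hS => by
      obtain ⟨b', hlen, hN, hb'⟩ := exists_block_extension (T := 2 * A) hF hU hδ (insert [] S)
        (S.sup List.sum + 1) A fun p hp => by
          rcases Finset.mem_insert.1 hp with rfl | hp
          · rw [List.length_nil]; omega
          · rw [(hS p hp).1]; omega
      obtain ⟨x, hx⟩ := List.exists_mem_of_length_pos (hlen ▸ hA)
      refine ⟨b', ⟨hlen, fun y hy => (hN y hy).trans_lt' (Nat.succ_pos _),
        fun m => by simpa using hb' m [] (Finset.mem_insert_self _ _)⟩,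
        fun p hp => ⟨?_, fun m => hb' m p (Finset.mem_insert_of_mem hp)⟩⟩
      calc p.sum ≤ S.sup List.sum := Finset.le_sup (f := List.sum) hp
        _ < x := hN x hx
        _ ≤ b'.sum := List.le_sum_of_mem hx
  refine ⟨b, fun i => (hP i).1, fun i => (hP i).2.1, fun i j hij => (hr i j hij).1,
    fun m i j hij => ?_⟩
  rw [← partialLim_of_length_eq (U := U) (T := 2 * A) (F m)
      (by rw [List.length_append, (hP i).1, (hP j).1]; ring),
    ← partialLim_nil]
  calc _ ≤ |L m (b i ++ b j) - L m (b i)| + |L m (b i) - L m []| := abs_sub_le _ _ _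
    _ ≤ A * δ + A * δ := add_le_add ((hr i j hij).2 m) ((hP i).2.2 m)
    _ = η := hAδ

end Blocks

section Trees

lemma cnt_mul (a b : 𝕋) : cnt (a * b) = cnt a + cnt b := rfl

def comb : ℕ → 𝕋
  | 0 | 1 => e1
  | n + 2 => comb (n + 1) * e1

lemma cnt_comb : ∀ {n : ℕ}, 0 < n → cnt (comb n) = n
  | 1, _ => rfl
  | n + 2, _ => by rw [comb, cnt_mul, cnt_comb n.succ_pos]; rfl

def balanced : ℕ → List ℕ → 𝕋
  | 0, l => comb l.headI
  | k + 1, l => balanced k (l.take (2 ^ k)) * balanced k (l.drop (2 ^ k))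

lemma cnt_balanced (k : ℕ) {l : List ℕ} (hl : l.length = 2 ^ k) (hpos : ∀ x ∈ l, 0 < x) :
    cnt (balanced k l) = l.sum := by
  induction k generalizing l with
  | zero =>
    obtain ⟨a, rfl⟩ := List.length_eq_one_iff.1 hl
    simpa [balanced] using cnt_comb (hpos a (by simp))
  | succ k ih =>
    rw [balanced, cnt_mul, ih (by rw [List.length_take, hl, pow_succ]; omega)
        (fun x hx => hpos x (List.mem_of_mem_take hx)),
      ih (by rw [List.length_drop, hl, pow_succ]; omega)
        (fun x hx => hpos x (List.mem_of_mem_drop hx)),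
      ← List.sum_append, List.take_append_drop]

lemma balanced_succ_append {k : ℕ} {l₁ : List ℕ} (l₂ : List ℕ) (hl₁ : l₁.length = 2 ^ k) :
    balanced (k + 1) (l₁ ++ l₂) = balanced k l₁ * balanced k l₂ := by
  rw [balanced, List.take_left' hl₁, List.drop_left' hl₁]

variable (k : ℕ)

def blockTree : Bool → List ℕ → 𝕋
  | false, b => balanced k (pairSums b)
  | true, b => balanced (k + 1) b

lemma cnt_blockTree (a : Bool) {b : List ℕ} (hb : b.length = 2 ^ (k + 1))
    (hpos : ∀ x ∈ b, 0 < x) : cnt (blockTree k a b) = b.sum := by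
  have heven : Even b.length := hb ▸ Nat.even_pow.2 ⟨even_two, k.succ_ne_zero⟩
  cases a with
  | false =>
    rw [blockTree, cnt_balanced k (by rw [length_pairSums, hb, pow_succ]; simp)
      (pos_of_mem_pairSums hpos), sum_pairSums heven]
  | true => exact cnt_balanced (k + 1) hb hpos

variable (c : 𝕋 → ℝ)

def blockFun : Bool ⊕ Bool × Bool → List ℕ → ℝ
  | .inl a, l => c (blockTree k a (l.take (2 ^ (k + 1))))
  | .inr (a, a'), l =>
    c (blockTree k a (l.take (2 ^ (k + 1))) * blockTree k a' (l.drop (2 ^ (k + 1))))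

lemma blockFun_mem_Icc (hc : ∀ t, c t ∈ Icc (0 : ℝ) 1) (m : Bool ⊕ Bool × Bool) (l : List ℕ) :
    blockFun k c m l ∈ Icc (0 : ℝ) 1 := by
  rcases m with a | ⟨a, a'⟩ <;> exact hc _

lemma blockFun_inl_append (a : Bool) {b : List ℕ} (b' : List ℕ) (hb : b.length = 2 ^ (k + 1)) :
    blockFun k c (.inl a) (b ++ b') = c (blockTree k a b) := by
  rw [blockFun, List.take_left' hb]

lemma blockFun_inr_append (a a' : Bool) {b : List ℕ} (b' : List ℕ)
    (hb : b.length = 2 ^ (k + 1)) :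
    blockFun k c (.inr (a, a')) (b ++ b') = c (blockTree k a b * blockTree k a' b') := by
  rw [blockFun, List.take_left' hb, List.drop_left' hb]

end Trees

section BlockLimits

variable (U : Ultrafilter ℕ) (c : 𝕋 → ℝ) (k : ℕ)

noncomputable def balancedLim : ℝ := iterLim U (2 ^ k) fun l => c (balanced k l)

noncomputable def blockLim (m : Bool ⊕ Bool × Bool) : ℝ :=
  iterLim U (2 * 2 ^ (k + 1)) (blockFun k c m)

variable {U c}

lemma balancedLim_mem_Icc (hc : ∀ t, c t ∈ Icc (0 : ℝ) 1) : balancedLim U c k ∈ Icc (0 : ℝ) 1 :=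
  iterLim_mem_Icc (fun _ => hc _) _

lemma blockLim_inl_false (hU : U + U = U) (hc : ∀ t, c t ∈ Icc (0 : ℝ) 1) :
    blockLim U c k (.inl false) = balancedLim U c k := by
  rw [blockLim, two_mul]
  refine (iterLim_take _ _ fun l => c (balanced k (pairSums l))).trans ?_
  rw [pow_succ']
  exact iterLim_pairSums hU (fun _ => hc _) _

lemma blockLim_inl_true : blockLim U c k (.inl true) = balancedLim U c (k + 1) := by
  rw [blockLim, two_mul]
  exact iterLim_take _ _ fun l => c (balanced (k + 1) l)

lemma blockLim_inr_false_false (hU : U + U = U) (hc : ∀ t, c t ∈ Icc (0 : ℝ) 1) :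
    blockLim U c k (.inr (false, false)) = balancedLim U c (k + 1) := by
  have hpair : ∀ l : List ℕ, l.length = 2 * 2 ^ (k + 1) →
      blockFun k c (.inr (false, false)) l = c (balanced (k + 1) (pairSums l)) := by
    intro l hl
    have htake : (l.take (2 ^ (k + 1))).length = 2 ^ (k + 1) := by simp [hl]
    conv_rhs => rw [← List.take_append_drop (2 ^ (k + 1)) l]
    rw [pairSums_append _ (by rw [htake]; exact Nat.even_pow.2 ⟨even_two, k.succ_ne_zero⟩),
      balanced_succ_append _ (by rw [length_pairSums, htake, pow_succ]; simp)]
    rfl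
  exact (iterLim_congr hpair).trans (iterLim_pairSums hU (fun _ => hc _) _)

lemma blockLim_inr_true_true : blockLim U c k (.inr (true, true)) = balancedLim U c (k + 2) := by
  rw [blockLim, balancedLim, pow_succ' 2 (k + 1)]
  rfl

end BlockLimits

section TwoPointMeasures

lemma exists_abs_le_of_mem_Icc {S : Type*} {g : S → ℝ} (hg : ∀ s, g s ∈ Icc (0 : ℝ) 1) :
    ∃ M, ∀ s, |g s| ≤ M :=
  ⟨1, fun s => abs_le.2 ⟨by linarith [(hg s).1], (hg s).2⟩⟩

lemma liftBdd_val {S : Type*} {g : S → ℝ} (hg : ∃ M, ∀ s, |g s| ≤ M) : (liftBdd g).1 = g := by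
  simp [liftBdd, hg]

def pairMeasure (α : ℝ) (t₁ t₂ : 𝕋) : Bdd 𝕋 → ℝ := fun f => α * f.1 t₁ + (1 - α) * f.1 t₂

variable {α : ℝ} {t₁ t₂ : 𝕋}

lemma pairMeasure_mem_Asets (hα : α ∈ Icc (0 : ℝ) 1) {n : ℕ} (h₁ : cnt t₁ = n)
    (h₂ : cnt t₂ = n) : pairMeasure α t₁ t₂ ∈ Asets n := by
  refine ⟨{t₁, t₂}, fun t => (if t = t₁ then α else 0) + (if t = t₂ then 1 - α else 0),
    ?_, fun t _ => ?_, ?_, fun f => ?_⟩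
  · simp only [Finset.mem_insert, Finset.mem_singleton]
    rintro t (rfl | rfl) <;> assumption
  · have := hα.1; have := hα.2
    dsimp only
    split_ifs <;> linarith
  · simp [Finset.sum_add_distrib]
  · simp [pairMeasure, Finset.sum_add_distrib, add_mul]

lemma pairMeasure_liftBdd {g : 𝕋 → ℝ} (hg : ∃ M, ∀ s, |g s| ≤ M) :
    pairMeasure α t₁ t₂ (liftBdd g) = α * g t₁ + (1 - α) * g t₂ := by
  rw [pairMeasure, liftBdd_val hg]

lemma hmul_pairMeasure_liftBdd {c : 𝕋 → ℝ} (hc : ∃ M, ∀ t, |c t| ≤ M) (β : ℝ) (s₁ s₂ : 𝕋) :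
    hmul (pairMeasure α t₁ t₂) (pairMeasure β s₁ s₂) (liftBdd c) =
      α * (β * c (t₁ * s₁) + (1 - β) * c (t₁ * s₂)) +
        (1 - α) * (β * c (t₂ * s₁) + (1 - β) * c (t₂ * s₂)) := by
  obtain ⟨M, hM⟩ := hc
  have hinner : ∀ x, pairMeasure β s₁ s₂ (liftBdd fun y => c (x * y)) =
      β * c (x * s₁) + (1 - β) * c (x * s₂) := fun x =>
    pairMeasure_liftBdd ⟨M, fun y => hM _⟩
  have houter : ∃ M', ∀ x, |β * c (x * s₁) + (1 - β) * c (x * s₂)| ≤ M' :=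
    ⟨|β| * M + |1 - β| * M, fun x => (abs_add_le _ _).trans (by
      rw [abs_mul, abs_mul]
      gcongr <;> exact hM _)⟩
  simp only [hmul, starM, liftBdd_val ⟨M, hM⟩, hinner]
  exact pairMeasure_liftBdd houter

lemma abs_convex_sub_le (hα : α ∈ Icc (0 : ℝ) 1) {v₁ v₂ w₁ w₂ e : ℝ} (h₁ : |v₁ - w₁| ≤ e)
    (h₂ : |v₂ - w₂| ≤ e) : |α * v₁ + (1 - α) * v₂ - (α * w₁ + (1 - α) * w₂)| ≤ e := by
  have hα₁ : 0 ≤ 1 - α := sub_nonneg.2 hα.2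
  calc _ = |α * (v₁ - w₁) + (1 - α) * (v₂ - w₂)| := by ring_nf
    _ ≤ α * |v₁ - w₁| + (1 - α) * |v₂ - w₂| := by
      refine (abs_add_le _ _).trans_eq ?_
      rw [abs_mul, abs_mul, abs_of_nonneg hα.1, abs_of_nonneg hα₁]
    _ ≤ α * e + (1 - α) * e := by gcongr; exact hα.1
    _ = e := by ring

end TwoPointMeasures

section Weight

variable {W : ℕ → ℝ} {ε : ℝ}

lemma exists_succ_sub_le (hW : ∀ k, W k ∈ Icc (0 : ℝ) 1) (hε : 0 < ε) :
    ∃ k, W (k + 1) - W k ≤ ε := by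
  by_contra! h
  have hgrow : ∀ n : ℕ, W 0 + n * ε ≤ W n := by
    intro n
    induction n with
    | zero => simp
    | succ n ih => push_cast; linarith [h n]
  obtain ⟨n, hn⟩ := exists_nat_gt (1 / ε)
  rw [div_lt_iff₀ hε] at hn
  linarith [hgrow n, (hW n).2, (hW 0).1]

lemma exists_small_step_or_sign_change (hW : ∀ k, W k ∈ Icc (0 : ℝ) 1) (hε : 0 < ε) :
    ∃ k, |W (k + 1) - W k| ≤ ε ∨ 0 ∈ uIcc (W (k + 2) - W (k + 1)) (W (k + 1) - W k) := by
  by_contra! h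
  rcases lt_trichotomy (W 1 - W 0) 0 with h0 | h0 | h0
  · have hneg : ∀ k, W (k + 1) - W k < 0 := fun k => by
      induction k with
      | zero => exact h0
      | succ k ih => exact lt_of_not_ge fun h' => (h k).2 (mem_uIcc.2 (Or.inr ⟨ih.le, h'⟩))
    obtain ⟨k, hk⟩ := exists_succ_sub_le (W := fun k => 1 - W k)
      (fun k => ⟨by linarith [(hW k).2], by linarith [(hW k).1]⟩) hε
    have := (h k).1
    rw [abs_of_neg (hneg k)] at this
    linarith
  · have := (h 0).1
    rw [zero_add, h0, abs_zero] at this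
    linarith
  · have hpos : ∀ k, 0 < W (k + 1) - W k := fun k => by
      induction k with
      | zero => exact h0
      | succ k ih => exact lt_of_not_ge fun h' => (h k).2 (mem_uIcc.2 (Or.inl ⟨h', ih.le⟩))
    obtain ⟨k, hk⟩ := exists_succ_sub_le hW hε
    have := (h k).1
    rw [abs_of_pos (hpos k)] at this
    linarith

lemma exists_weight (hW : ∀ k, W k ∈ Icc (0 : ℝ) 1) (hε : 0 < ε) (X Y : ℕ → ℝ) :
    ∃ k, ∃ α ∈ Icc (0 : ℝ) 1,
    |α * (α * W (k + 1) + (1 - α) * X k) + (1 - α) * (α * Y k + (1 - α) * W (k + 2)) -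
      (α * W k + (1 - α) * W (k + 1))| ≤ ε := by
  obtain ⟨k, hk | hk⟩ := exists_small_step_or_sign_change hW hε
  · exact ⟨k, 1, ⟨zero_le_one, le_rfl⟩, by simpa using hk⟩
  · let f : ℝ → ℝ := fun α => α * (α * W (k + 1) + (1 - α) * X k) +
      (1 - α) * (α * Y k + (1 - α) * W (k + 2)) - (α * W k + (1 - α) * W (k + 1))
    have hf₀ : f 0 = W (k + 2) - W (k + 1) := by simp only [f]; ring
    have hf₁ : f 1 = W (k + 1) - W k := by simp only [f]; ring
    obtain ⟨α, hα, hfα⟩ := intermediate_value_uIcc (by fun_prop) (hf₀ ▸ hf₁ ▸ hk)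
    rw [uIcc_of_le zero_le_one] at hα
    refine ⟨k, α, hα, ?_⟩
    change |f α| ≤ ε
    rw [hfα, abs_zero]
    exact hε.le

end Weight

section BlockMeasures

variable {U : Ultrafilter ℕ} {c : 𝕋 → ℝ} (k : ℕ) {α : ℝ}

def blockMeasure (α : ℝ) (b : List ℕ) : Bdd 𝕋 → ℝ :=
  pairMeasure α (blockTree k false b) (blockTree k true b)

lemma blockMeasure_mem_Asets (hα : α ∈ Icc (0 : ℝ) 1) {b : List ℕ} (hb : b.length = 2 ^ (k + 1))
    (hpos : ∀ x ∈ b, 0 < x) : blockMeasure k α b ∈ Asets b.sum :=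
  pairMeasure_mem_Asets hα (cnt_blockTree k _ hb hpos) (cnt_blockTree k _ hb hpos)

variable {k} {b b' : List ℕ} {δ : ℝ}

lemma abs_blockMeasure_sub_le (hU : U + U = U) (hc : ∀ t, c t ∈ Icc (0 : ℝ) 1)
    (hα : α ∈ Icc (0 : ℝ) 1) (hb : b.length = 2 ^ (k + 1))
    (hδ : ∀ m, |blockFun k c m (b ++ b') - blockLim U c k m| ≤ δ) :
    |blockMeasure k α b (liftBdd c) - (α * balancedLim U c k + (1 - α) * balancedLim U c (k + 1))|
      ≤ δ := by
  have h := abs_convex_sub_le hα (hδ (.inl false)) (hδ (.inl true))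
  rwa [blockFun_inl_append k c _ _ hb, blockFun_inl_append k c _ _ hb,
    blockLim_inl_false k hU hc, blockLim_inl_true,
    ← pairMeasure_liftBdd (exists_abs_le_of_mem_Icc hc)] at h

lemma abs_hmul_blockMeasure_sub_le (hU : U + U = U) (hc : ∀ t, c t ∈ Icc (0 : ℝ) 1)
    (hα : α ∈ Icc (0 : ℝ) 1) (hb : b.length = 2 ^ (k + 1))
    (hδ : ∀ m, |blockFun k c m (b ++ b') - blockLim U c k m| ≤ δ) :
    |hmul (blockMeasure k α b) (blockMeasure k α b') (liftBdd c) -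
      (α * (α * balancedLim U c (k + 1) + (1 - α) * blockLim U c k (.inr (false, true))) +
        (1 - α) * (α * blockLim U c k (.inr (true, false)) + (1 - α) * balancedLim U c (k + 2)))|
      ≤ δ := by
  have h := abs_convex_sub_le hα
    (abs_convex_sub_le hα (hδ (.inr (false, false))) (hδ (.inr (false, true))))
    (abs_convex_sub_le hα (hδ (.inr (true, false))) (hδ (.inr (true, true))))
  simp only [blockFun_inr_append k c _ _ _ hb, blockLim_inr_false_false k hU hc,
    blockLim_inr_true_true] at h
  rwa [blockMeasure, blockMeasure, hmul_pairMeasure_liftBdd (exists_abs_le_of_mem_Icc hc)]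

end BlockMeasures

end HindmanForPairs

open HindmanForPairs in
/-- Theorem 1.2: for every `c : 𝕋 → [0,1]` and `ε > 0`, there are
`r ∈ [0,1]` and an increasing sequence `(μ_i)` in `𝔸` with `|c(μ_i) - r| < ε`
for all `i` and `|c(μ_iˆμ_j) - r| < ε` for all `i < j`. -/
theorem hindman_for_pairs (c : 𝕋 → ℝ) (hc : ∀ t, c t ∈ Set.Icc (0 : ℝ) 1)
    (ε : ℝ) (hε : 0 < ε) :
    ∃ r ∈ Set.Icc (0 : ℝ) 1, ∃ (μ : ℕ → (Bdd 𝕋 → ℝ)) (ns : ℕ → ℕ),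
      StrictMono ns ∧ (∀ i, μ i ∈ Asets (ns i)) ∧
      (∀ i, |μ i (liftBdd c) - r| < ε) ∧
      (∀ i j, i < j → |hmul (μ i) (μ j) (liftBdd c) - r| < ε) := by
  obtain ⟨U, hU, hUtop⟩ := exists_idempotent_ultrafilter_le_atTop
  obtain ⟨k, α, hα, hk⟩ := exists_weight (fun k => balancedLim_mem_Icc (U := U) k hc)
    (half_pos hε) (fun k => blockLim U c k (.inr (false, true)))
    (fun k => blockLim U c k (.inr (true, false)))
  obtain ⟨b, hlen, hpos, hmono, hb⟩ := exists_seq_blocks (blockFun_mem_Icc k c hc) hUtop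
    (Nat.two_pow_pos (k + 1)) (div_pos hε four_pos)
  refine ⟨α * balancedLim U c k + (1 - α) * balancedLim U c (k + 1),
    convex_Icc (0 : ℝ) 1 (balancedLim_mem_Icc k hc) (balancedLim_mem_Icc (k + 1) hc) hα.1
      (sub_nonneg.2 hα.2) (add_sub_cancel α 1),
    fun i => blockMeasure k α (b i), fun i => (b i).sum, hmono,
    fun i => blockMeasure_mem_Asets k hα (hlen i) (hpos i), fun i => ?_, fun i j hij => ?_⟩
  · linarith [abs_blockMeasure_sub_le hU hc hα (hlen i) fun m => hb m i (i + 1) i.lt_succ_self]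
  · obtain ⟨h₁, h₂⟩ :=
      abs_le.1 (abs_hmul_blockMeasure_sub_le hU hc hα (hlen i) fun m => hb m i j hij)
    obtain ⟨h₃, h₄⟩ := abs_le.1 hk
    exact abs_lt.2 ⟨by linarith, by linarith⟩
end

section
/- Let t ∈ 𝕋, let k < #(t), let ν_0,…,ν_{k−1} ∈ 𝔸, and let μ ∈ Pr(𝕋) satisfy μˆμ = μ. Then t(ν_0,…,ν_{k−1}; μ) = t_k(ν_0,…,ν_{k−1}; μ), where for s ∈ 𝕋 with #(s) ≥ k, s(ν_0,…,ν_{k−1}; μ) denotes the substitution s(ν_0,…,ν_{k−1}, μ, μ, …, μ) with μ filling the remaining #(s) − k slots. -/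
open scoped Classical

lemma cnt_pos (t : 𝕋) : 0 < cnt t := by
  induction t with
  | of _ => simp [cnt]
  | mul a b iha ihb => simp [cnt]; omega

lemma k_lt_cnt_tk (t : 𝕋) (k : ℕ) (hk : k < cnt t) : k < cnt (tk t k) := by
  induction t generalizing k with
  | of _ => simp [cnt] at hk; simpa [tk, e1, cnt, hk]
  | mul a b iha ihb =>
    simp [cnt] at hk
    by_cases h : k < cnt a
    · have := iha k h
      simp [tk, h, cnt, e1]; omega
    · have hb : k - cnt a < cnt b := by omega
      have := ihb (k - cnt a) hb
      simp [tk, h, cnt]; omega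

lemma substM_all_mu (μ : Bdd 𝕋 → ℝ) (hid : hmul μ μ = μ) :
    ∀ (t : 𝕋) (l : List (Bdd 𝕋 → ℝ)), l.length = cnt t → (∀ x ∈ l, x = μ) →
      substM t l = μ := by
  intro t
  induction t with
  | of _ =>
    intro l hl hall
    show l.headI = μ
    cases l with
    | nil => simp [cnt] at hl
    | cons x xs => exact hall x (by simp)
  | mul a b iha ihb =>
    intro l hl hall
    simp [cnt] at hl
    have h1 : substM a (l.take (cnt a)) = μ := by
      apply iha
      · simp only [List.length_take, hl]; omega
      · intro x hx; exact hall x (List.mem_of_mem_take hx)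
    have h2 : substM b (l.drop (cnt a)) = μ := by
      apply ihb
      · simp [hl]
      · intro x hx; exact hall x (List.mem_of_mem_drop hx)
    simp [substM, h1, h2, hid]

lemma range_map_take (f : ℕ → (Bdd 𝕋 → ℝ)) (m n : ℕ) :
    (((List.range (m + n)).map f).take m) = (List.range m).map f := by
  rw [List.range_add, List.map_append]
  exact List.take_left' (by simp)

lemma range_map_drop (f : ℕ → (Bdd 𝕋 → ℝ)) (m n : ℕ) :
    (((List.range (m + n)).map f).drop m) = (List.range n).map (fun i => f (m + i)) := by
  rw [List.range_add, List.map_append]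
  rw [List.drop_left' (by simp), List.map_map]
  rfl

lemma subst_idempotent_reduce_aux (μ : Bdd 𝕋 → ℝ) (hid : hmul μ μ = μ) :
    ∀ (t : 𝕋) (k : ℕ), k < cnt t → ∀ (ν : ℕ → (Bdd 𝕋 → ℝ)),
    substM t ((List.range (cnt t)).map fun i => if i < k then ν i else μ) =
      substM (tk t k)
        ((List.range (cnt (tk t k))).map fun i => if i < k then ν i else μ) := by
  intro t
  induction t with
  | of u =>
    intro k hk ν
    simp [cnt] at hk
    subst hk
    rfl
  | mul a b iha ihb =>
    intro k hk ν
    set f : ℕ → (Bdd 𝕋 → ℝ) := fun i => if i < k then ν i else μ with hf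
    simp only [cnt] at hk ⊢
    by_cases h : k < cnt a
    · -- t_k = tk a k * e1
      have hcnt : cnt (tk (FreeMagma.mul a b) k) = cnt (tk a k) + 1 := by
        simp [tk, h, cnt, e1]
      have htk : tk (FreeMagma.mul a b) k = (tk a k).mul e1 := by simp [tk, h]
      rw [htk]
      show hmul _ _ = hmul _ _
      have hL1 : (((List.range (cnt a + cnt b)).map f).take (cnt a)) =
          (List.range (cnt a)).map f := range_map_take f _ _
      have hL2 : (((List.range (cnt a + cnt b)).map f).drop (cnt a)) =
          (List.range (cnt b)).map (fun i => f (cnt a + i)) := range_map_drop f _ _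
      simp only [cnt, e1]
      rw [hL1, hL2, range_map_take f _ _, range_map_drop f _ _]
      have hb : substM b ((List.range (cnt b)).map (fun i => f (cnt a + i))) = μ := by
        apply substM_all_mu μ hid
        · simp
        · intro x hx
          simp only [List.mem_map, List.mem_range] at hx
          obtain ⟨i, _, rfl⟩ := hx
          simp [hf]; omega
      have hktk := k_lt_cnt_tk a k h
      have he1 : substM (FreeMagma.of ()) ((List.range 1).map (fun i => f (cnt (tk a k) + i))) = μ := by
        apply substM_all_mu μ hid
        · simp [cnt]
        · intro x hx
          simp only [List.mem_map, List.mem_range] at hx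
          obtain ⟨i, hi, rfl⟩ := hx
          simp [hf]; omega
      rw [hb, he1, iha k h ν]
    · -- t_k = a * tk b (k - cnt a)
      have hkb : k - cnt a < cnt b := by omega
      have htk : tk (FreeMagma.mul a b) k = a.mul (tk b (k - cnt a)) := by simp [tk, h]
      rw [htk]
      show hmul _ _ = hmul _ _
      simp only [cnt]
      rw [range_map_take f _ _, range_map_drop f _ _,
        range_map_take f _ _, range_map_drop f _ _]
      have hfun : (fun i => f (cnt a + i)) =
          (fun i => if i < k - cnt a then ν (cnt a + i) else μ) := by
        funext i
        simp only [hf]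
        by_cases hi : i < k - cnt a
        · rw [if_pos (by omega), if_pos hi]
        · rw [if_neg (by omega), if_neg hi]
      rw [hfun, ihb (k - cnt a) hkb (fun i => ν (cnt a + i))]

/-- if `μ` is idempotent, then
`t(ν_0,…,ν_{k-1}; μ) = t_k(ν_0,…,ν_{k-1}; μ)`. -/
theorem subst_idempotent_reduce (t : 𝕋) (k : ℕ) (hk : k < cnt t)
    (ν : ℕ → (Bdd 𝕋 → ℝ)) (hν : ∀ i < k, ∃ n, ν i ∈ Asets n)
    (μ : Bdd 𝕋 → ℝ) (hμ : μ ∈ PrSet 𝕋) (hid : hmul μ μ = μ) :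
    substM t ((List.range (cnt t)).map fun i => if i < k then ν i else μ) =
      substM (tk t k)
        ((List.range (cnt (tk t k))).map fun i => if i < k then ν i else μ) := by
  exact subst_idempotent_reduce_aux μ hid t k hk ν
end
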